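/- Let d be the degree-1 derivation on the exterior algebra of the 6-dimensional vector space with basis e^1,…,e^6 determined by d e^i = 0 for i = 1,2,4,5, d e^3 = e^{25}, d e^6 = −e^{24} (extended as a graded derivation). Then d∘d = 0, and with ω = e^{12}+e^{34}+e^{56}, ψ₊ = e^{135}−e^{146}−e^{236}−e^{245}, ψ₋ = e^{136}+e^{145}+e^{235}−e^{246}, one has dω = 0, dψ₊ = 0, and dψ₋ = e^{1234} − e^{1256}. -/
import Mathlib


open ExteriorAlgebra

/-- The coframe `e^1, …, e^6` of `(ℝ^6)^*`, realised as degree-one generators of the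
exterior algebra of `ℝ^6` (indexed from `0`, so `e 0` is `e^1`). -/
noncomputable def e (i : Fin 6) : ExteriorAlgebra ℝ (Fin 6 → ℝ) :=
  ExteriorAlgebra.ι ℝ (Pi.single i 1)

lemma e_def' (i : Fin 6) : ι ℝ (Pi.single i 1) = e i := rfl

lemma esq2' (i : Fin 6) : e i * e i = 0 := ι_sq_zero _

lemma esq' (i : Fin 6) (x : ExteriorAlgebra ℝ (Fin 6 → ℝ)) : e i * (e i * x) = 0 := by
  rw [← mul_assoc, esq2', zero_mul]

lemma eswap2' (i j : Fin 6) : e j * e i = -(e i * e j) := by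
  have h := ι_add_mul_swap (R := ℝ) ((Pi.single i 1 : Fin 6 → ℝ)) ((Pi.single j 1 : Fin 6 → ℝ))
  rw [e_def', e_def'] at h
  rw [eq_neg_iff_add_eq_zero, add_comm, h]

lemma eswap' (i j : Fin 6) (x : ExteriorAlgebra ℝ (Fin 6 → ℝ)) :
    e j * (e i * x) = -(e i * (e j * x)) := by
  rw [← mul_assoc, eswap2', neg_mul, mul_assoc]

lemma vdecomp' (v : Fin 6 → ℝ) :
    ι ℝ v = v 0 • e 0 + v 1 • e 1 + v 2 • e 2 + v 3 • e 3 + v 4 • e 4 + v 5 • e 5 := by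
  have : v = v 0 • (Pi.single 0 1 : Fin 6 → ℝ) + v 1 • (Pi.single 1 1 : Fin 6 → ℝ)
      + v 2 • (Pi.single 2 1 : Fin 6 → ℝ) + v 3 • (Pi.single 3 1 : Fin 6 → ℝ)
      + v 4 • (Pi.single 4 1 : Fin 6 → ℝ) + v 5 • (Pi.single 5 1 : Fin 6 → ℝ) := by
    ext i; fin_cases i <;> simp [Pi.single_apply]
  rw [this]
  simp [map_add, map_smul, e_def']

set_option maxHeartbeats 1000000 in
/-- Let `d` be the degree-1 graded derivation (antiderivation) of the exterior algebra
determined by `d e^i = 0` for `i = 1,2,4,5`, `d e^3 = e^{25}`, `d e^6 = −e^{24}`.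
The hypotheses `hone` and `hleib` (the graded Leibniz rule for multiplication by a
degree-one element) together with the values on the generators characterise `d` uniquely.
Then `d∘d = 0`, `dω = 0`, `dψ₊ = 0` and `dψ₋ = e^{1234} − e^{1256}`. -/
theorem nilmanifold_torsion_W2minus
    (d : ExteriorAlgebra ℝ (Fin 6 → ℝ) →ₗ[ℝ] ExteriorAlgebra ℝ (Fin 6 → ℝ))
    (hone : d 1 = 0)
    (hleib : ∀ (v : Fin 6 → ℝ) (x : ExteriorAlgebra ℝ (Fin 6 → ℝ)),
      d (ι ℝ v * x) = d (ι ℝ v) * x - ι ℝ v * d x)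
    (h1 : d (e 0) = 0) (h2 : d (e 1) = 0) (h4 : d (e 3) = 0) (h5 : d (e 4) = 0)
    (h3 : d (e 2) = e 1 * e 4) (h6 : d (e 5) = -(e 1 * e 3)) :
    d ∘ₗ d = 0 ∧
    d (e 0 * e 1 + e 2 * e 3 + e 4 * e 5) = 0 ∧
    d (e 0 * e 2 * e 4 - e 0 * e 3 * e 5 - e 1 * e 2 * e 5 - e 1 * e 3 * e 4) = 0 ∧
    d (e 0 * e 2 * e 5 + e 0 * e 3 * e 4 + e 1 * e 2 * e 4 - e 1 * e 3 * e 5) =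
      e 0 * e 1 * e 2 * e 3 - e 0 * e 1 * e 4 * e 5 := by
  have hle : ∀ (i : Fin 6) (x), d (e i * x) = d (e i) * x - e i * d x := by
    intro i x; exact hleib (Pi.single i 1) x
  have hdι : ∀ v : Fin 6 → ℝ, d (ι ℝ v) = v 2 • (e 1 * e 4) - v 5 • (e 1 * e 3) := by
    intro v
    rw [vdecomp' v]
    simp only [map_add, map_smul, h1, h2, h3, h4, h5, h6, smul_zero, zero_add, add_zero,
      smul_neg]
    abel
  have hA : ∀ (j : Fin 6) (x), d (e j) = 0 → d (e 1 * (e j * x)) = e 1 * (e j * d x) := by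
    intro j x hj
    rw [hle, hle, h2, hj]
    simp
  have hB : ∀ (v : Fin 6 → ℝ) (x), d (d (ι ℝ v * x)) = ι ℝ v * d (d x) := by
    intro v x
    rw [hleib, map_sub, hleib, hdι v, sub_mul, smul_mul_assoc, smul_mul_assoc,
      map_sub, map_smul, map_smul, mul_assoc, mul_assoc, hA 4 x h5, hA 3 x h4,
      sub_mul, smul_mul_assoc, smul_mul_assoc, mul_assoc, mul_assoc]
    abel
  refine ⟨?_, ?_, ?_, ?_⟩
  · refine LinearMap.ext fun x => ?_
    show d (d x) = 0
    have key : ∀ y : ExteriorAlgebra ℝ (Fin 6 → ℝ), ∀ z, d (d z) = 0 → d (d (y * z)) = 0 := by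
      intro y
      induction y using ExteriorAlgebra.induction with
      | algebraMap r =>
          intro z hz
          rw [Algebra.algebraMap_eq_smul_one, smul_mul_assoc, one_mul, map_smul, map_smul, hz,
            smul_zero]
      | ι v => intro z hz; rw [hB, hz, mul_zero]
      | mul a b ha hb => intro z hz; rw [mul_assoc]; exact ha _ (hb _ hz)
      | add a b ha hb => intro z hz; rw [add_mul, map_add, map_add, ha _ hz, hb _ hz, add_zero]
    have := key x 1 (by rw [hone, map_zero])
    rwa [mul_one] at this
  · rw [map_add, map_add, hle 0 (e 1), hle 2 (e 3), hle 4 (e 5), h1, h2, h3, h4, h5, h6]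
    simp only [zero_mul, mul_zero, sub_zero, zero_sub, mul_neg, neg_neg]
    simp only [mul_assoc, eswap' 1 4, esq', esq2', mul_zero, neg_zero, mul_neg, neg_neg]
    abel
  · simp only [mul_assoc, map_sub]
    rw [hle 0 (e 2 * e 4), hle 2 (e 4), hle 0 (e 3 * e 5), hle 3 (e 5),
      hle 1 (e 2 * e 5), hle 2 (e 5), hle 1 (e 3 * e 4), hle 3 (e 4),
      h1, h2, h3, h4, h5, h6]
    simp only [zero_mul, mul_zero, sub_zero, zero_sub, mul_neg, neg_neg, mul_one,
      mul_add, mul_sub, smul_neg, mul_smul_comm]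
    simp only [mul_assoc, esq', eswap' 1 2, eswap' 1 3, eswap' 1 4, esq2', mul_zero, neg_zero,
      mul_neg, neg_neg, smul_zero]
    abel
  · simp only [mul_assoc, map_add, map_sub]
    rw [hle 0 (e 2 * e 5), hle 2 (e 5), hle 0 (e 3 * e 4), hle 3 (e 4),
      hle 1 (e 2 * e 4), hle 2 (e 4), hle 1 (e 3 * e 5), hle 3 (e 5),
      h1, h2, h3, h4, h5, h6]
    simp only [zero_mul, mul_zero, sub_zero, zero_sub, mul_neg, neg_neg, mul_one,
      mul_add, mul_sub, smul_neg, mul_smul_comm]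
    simp only [mul_assoc, esq', eswap' 1 2, eswap' 1 3, eswap' 1 4, esq2', mul_zero, neg_zero,
      mul_neg, neg_neg, smul_zero]
    abel
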